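/- arXiv:2301.13800 — 5 statements merged into one kernel-verified Lean document; each statement's English description precedes it below -/
import Mathlib

section
/- For all positive integers n, m, r with n ≥ m·r, the number of partitions of an n-element set into exactly m blocks, each of size at least r, is at least m^n / m^(m·r) and at most m^n / m!. -/
/-!
Labelling the `m` blocks of a partition in all `m!` possible ways gives pairwise distinct maps
`Fin n → Fin m` (a map determines its fibers, hence the partition and the labelling), so
`m! · S(n, m, ≥r) ≤ m ^ n`. Conversely, cut the first `m * r` points into `m` blocks of size `r`,
one for each label. Every map from the remaining `n - m * r` points to the labels extends to
a map whose fibers form a partition counted by `S(n, m, ≥r)`, and distinct maps give distinct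
partitions because every block still contains the fixed points of its label. Hence
`S(n, m, ≥r) ≥ m ^ (n - m * r) ≥ m ^ n / m ^ (m * r)`.
-/

/-- The `r`-associated Stirling number: the number of partitions of `{1,...,n}`
(modelled as `Fin n`) into exactly `m` blocks, each of size at least `r`. -/
noncomputable def stirlingGe (n m r : ℕ) : ℕ :=
  Set.ncard {P : Finset (Finset (Fin n)) |
    P.card = m ∧ (∀ b ∈ P, r ≤ b.card) ∧ ∀ x : Fin n, ∃! b, b ∈ P ∧ x ∈ b}

open Finset Function

namespace StirlingGe

variable {α β : Type*}

def IsPartition [DecidableEq α] (P : Finset (Finset α)) : Prop :=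
  ∀ x : α, ∃! b, b ∈ P ∧ x ∈ b

def partitionsGe (α : Type*) [DecidableEq α] (m r : ℕ) : Set (Finset (Finset α)) :=
  {P | P.card = m ∧ (∀ b ∈ P, r ≤ b.card) ∧ IsPartition P}

theorem stirlingGe_eq_ncard (n m r : ℕ) :
    stirlingGe n m r = (partitionsGe (Fin n) m r).ncard :=
  rfl

section Fibers

variable [Fintype α] [DecidableEq β]

def fiber (f : α → β) (i : β) : Finset α :=
  univ.filter (f · = i)

@[simp]
theorem mem_fiber {f : α → β} {i : β} {x : α} : x ∈ fiber f i ↔ f x = i := by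
  simp [fiber]

theorem fiber_injective {f : α → β} (hf : Surjective f) : Injective (fiber f) := by
  intro i j hij
  obtain ⟨x, rfl⟩ := hf i
  exact mem_fiber.1 (hij ▸ mem_fiber.2 rfl : x ∈ fiber f j)

variable [DecidableEq α] [Fintype β]

def fibers (f : α → β) : Finset (Finset α) :=
  univ.image (fiber f)

theorem mem_fibers {f : α → β} {b : Finset α} : b ∈ fibers f ↔ ∃ i, fiber f i = b := by
  simp [fibers]

theorem card_fibers {f : α → β} (hf : Surjective f) : #(fibers f) = Fintype.card β := by
  rw [fibers, card_image_of_injective _ (fiber_injective hf), card_univ]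

theorem isPartition_fibers (f : α → β) : IsPartition (fibers f) := by
  intro x
  refine ⟨fiber f (f x), ⟨mem_fibers.2 ⟨_, rfl⟩, mem_fiber.2 rfl⟩, ?_⟩
  rintro b ⟨hb, hxb⟩
  obtain ⟨i, rfl⟩ := mem_fibers.1 hb
  rw [mem_fiber.1 hxb]

theorem fibers_mem_partitionsGe {f : α → β} {r : ℕ} (hf : Surjective f)
    (hr : ∀ i, r ≤ #(fiber f i)) : fibers f ∈ partitionsGe α (Fintype.card β) r := by
  refine ⟨card_fibers hf, ?_, isPartition_fibers f⟩
  intro b hb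
  obtain ⟨i, rfl⟩ := mem_fibers.1 hb
  exact hr i

theorem eq_of_fibers_eq {f g : α → β} (h : fibers f = fibers g)
    (hfg : ∀ i, ∃ a, f a = i ∧ g a = i) : f = g := by
  funext x
  obtain ⟨j, hj⟩ := mem_fibers.1 (h ▸ mem_fibers.2 ⟨f x, rfl⟩ : fiber f (f x) ∈ fibers g)
  obtain ⟨a, hfa, hga⟩ := hfg (f x)
  have hja : g a = j := mem_fiber.1 (hj ▸ mem_fiber.2 hfa)
  have hx : x ∈ fiber g j := hj ▸ mem_fiber.2 rfl
  rw [mem_fiber.1 hx, ← hja, hga]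

end Fibers

section Labelling

variable [DecidableEq α] {P : Finset (Finset α)}

theorem IsPartition.choose_eq_iff (hP : IsPartition P) {x : α} {b : Finset α} (hb : b ∈ P) :
    P.choose (x ∈ ·) (hP x) = b ↔ x ∈ b := by
  constructor
  · rintro rfl
    exact P.choose_property _ (hP x)
  · intro hx
    exact (hP x).unique ⟨P.choose_mem _ (hP x), P.choose_property _ (hP x)⟩ ⟨hb, hx⟩

def IsPartition.labelling (hP : IsPartition P) (e : P ≃ β) (x : α) : β :=
  e ⟨P.choose (x ∈ ·) (hP x), P.choose_mem _ (hP x)⟩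

variable [Fintype α] [DecidableEq β]

theorem IsPartition.fiber_labelling (hP : IsPartition P) (e : P ≃ β) (i : β) :
    fiber (hP.labelling e) i = e.symm i := by
  ext x
  rw [mem_fiber, labelling, ← e.eq_symm_apply, Subtype.ext_iff, hP.choose_eq_iff (e.symm i).2]

variable [Fintype β]

theorem IsPartition.fibers_labelling (hP : IsPartition P) (e : P ≃ β) :
    fibers (hP.labelling e) = P := by
  ext b
  simp only [mem_fibers, hP.fiber_labelling]
  exact ⟨by rintro ⟨i, rfl⟩; exact (e.symm i).2, fun hb => ⟨e ⟨b, hb⟩, by simp⟩⟩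

theorem labelling_injective {S : Set (Finset (Finset α))} (hS : ∀ P ∈ S, IsPartition P) :
    Injective fun Pe : Σ P : S, (P.1 ≃ β) => (hS _ Pe.1.2).labelling Pe.2 := by
  rintro ⟨⟨P, hP⟩, e⟩ ⟨⟨Q, hQ⟩, e'⟩ h
  obtain rfl : P = Q := by
    rw [← (hS P hP).fibers_labelling e, ← (hS Q hQ).fibers_labelling e']
    exact congrArg fibers h
  have hsymm : e.symm = e'.symm := by
    ext i : 2
    simpa only [IsPartition.fiber_labelling] using congrArg (fiber · i) h
  obtain rfl : e = e' := by simpa using congrArg Equiv.symm hsymm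
  rfl

end Labelling

section Counting

variable [Fintype α] [DecidableEq α]

theorem ncard_partitionsGe_mul_factorial_le (m r : ℕ) :
    (partitionsGe α m r).ncard * m.factorial ≤ m ^ Fintype.card α := by
  classical
  set S := partitionsGe α m r
  have hS : ∀ P ∈ S, IsPartition P := fun _ hP => hP.2.2
  calc S.ncard * m.factorial = Nat.card (Σ P : S, (P.1 ≃ Fin m)) := by
        rw [Nat.card_sigma, ← Nat.card_coe_set_eq, Nat.card_eq_fintype_card]
        rw [Finset.sum_congr rfl fun P _ => ?_, sum_const, card_univ, smul_eq_mul]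
        rw [Nat.card_eq_fintype_card, Fintype.card_equiv (P.1.equivFinOfCardEq P.2.1),
          Fintype.card_coe, P.2.1]
    _ ≤ Nat.card (α → Fin m) := Nat.card_le_card_of_injective _ (labelling_injective hS)
    _ = m ^ Fintype.card α := by simp

theorem pow_le_ncard_partitionsGe {m r : ℕ} (hr : 0 < r) (h : m * r ≤ Fintype.card α) :
    m ^ (Fintype.card α - m * r) ≤ (partitionsGe α m r).ncard := by
  set k := Fintype.card α - m * r
  let e : (Fin m × Fin r) ⊕ Fin k ≃ α := Fintype.equivOfCardEq (by simp [k]; omega)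
  let extend (g : Fin k → Fin m) : α → Fin m := Sum.elim Prod.fst g ∘ e.symm
  have hbase (g : Fin k → Fin m) (i : Fin m) (t : Fin r) : extend g (e (.inl (i, t))) = i := by
    simp [extend]
  have hmem (g : Fin k → Fin m) : fibers (extend g) ∈ partitionsGe α m r := by
    have hsurj : Surjective (extend g) := fun i => ⟨_, hbase g i ⟨0, hr⟩⟩
    have hfiber (i : Fin m) : r ≤ #(fiber (extend g) i) := by
      have hblock : Injective fun t : Fin r => e (.inl (i, t)) := fun t s hts => by
        simpa using e.injective hts
      calc r = #(univ.image fun t : Fin r => e (.inl (i, t))) := by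
            rw [card_image_of_injective _ hblock, card_univ, Fintype.card_fin]
        _ ≤ #(fiber (extend g) i) := card_le_card fun x hx => by
            obtain ⟨t, -, rfl⟩ := mem_image.1 hx
            exact mem_fiber.2 (hbase g i t)
    simpa only [Fintype.card_fin] using fibers_mem_partitionsGe hsurj hfiber
  have hextend : Injective extend := fun g g' hgg => by
    funext j
    simpa [extend] using congrFun hgg (e (.inr j))
  have hinj : Injective fun g => (⟨fibers (extend g), hmem g⟩ : partitionsGe α m r) :=
    fun g g' hgg => hextend <| eq_of_fibers_eq (congrArg Subtype.val hgg) fun i =>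
      ⟨_, hbase g i ⟨0, hr⟩, hbase g' i ⟨0, hr⟩⟩
  calc m ^ k = Nat.card (Fin k → Fin m) := by simp
    _ ≤ _ := Nat.card_le_card_of_injective _ hinj
    _ = _ := Nat.card_coe_set_eq _

end Counting

end StirlingGe

theorem stmt_0_general (n m r : ℕ) (hr : 0 < r)
    (h : m * r ≤ n) :
    (m : ℝ) ^ n / (m : ℝ) ^ (m * r) ≤ (stirlingGe n m r : ℝ) ∧
      (stirlingGe n m r : ℝ) ≤ (m : ℝ) ^ n / (Nat.factorial m : ℝ) := by
  have hlower := StirlingGe.pow_le_ncard_partitionsGe (α := Fin n) hr (by simpa using h)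
  have hupper := StirlingGe.ncard_partitionsGe_mul_factorial_le (α := Fin n) m r
  rw [Fintype.card_fin] at hlower hupper
  rw [StirlingGe.stirlingGe_eq_ncard]
  constructor
  · calc (m : ℝ) ^ n / (m : ℝ) ^ (m * r)
        = (m : ℝ) ^ (n - m * r) * ((m : ℝ) ^ (m * r) / (m : ℝ) ^ (m * r)) := by
          rw [← mul_div_assoc, ← pow_add, Nat.sub_add_cancel h]
      _ ≤ (m : ℝ) ^ (n - m * r) :=
          mul_le_of_le_one_right (by positivity) (div_self_le_one _)
      _ ≤ _ := by exact_mod_cast hlower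
  · rw [le_div_iff₀ (by positivity)]
    exact_mod_cast hupper

theorem stmt_0 (n m r : ℕ) (hn : 0 < n) (hm : 0 < m) (hr : 0 < r)
    (h : m * r ≤ n) :
    (m : ℝ) ^ n / (m : ℝ) ^ (m * r) ≤ (stirlingGe n m r : ℝ) ∧
      (stirlingGe n m r : ℝ) ≤ (m : ℝ) ^ n / (Nat.factorial m : ℝ) :=
  stmt_0_general n m r hr h
end

section
/- The number of functions f : {1,...,n} → {1,...,m} such that every fiber f⁻¹({k}) has size at least r, where n ≥ m·r, is at least m! · m^(n − m·r). -/
theorem stmt_2 (n m r : ℕ) (hn : 0 < n) (hm : 0 < m) (hr : 0 < r)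
    (h : m * r ≤ n) :
    Nat.factorial m * m ^ (n - m * r) ≤
      Nat.card {f : Fin n → Fin m //
        ∀ k : Fin m, r ≤ (Finset.univ.filter fun x => f x = k).card} := by
  classical
  -- the basic function construction
  have hdiv : ∀ x : Fin n, (x : ℕ) < m * r → (x : ℕ) / r < m := by
    intro x hx
    exact (Nat.div_lt_iff_lt_mul hr).2 hx
  have hsub : ∀ x : Fin n, ¬ (x : ℕ) < m * r → (x : ℕ) - m * r < n - m * r := by
    intro x hx
    exact Nat.sub_lt_sub_right (le_of_not_gt hx) x.isLt
  set F : Equiv.Perm (Fin m) × (Fin (n - m * r) → Fin m) → (Fin n → Fin m) :=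
    fun p x =>
      if hx : (x : ℕ) < m * r then p.1 ⟨(x : ℕ) / r, hdiv x hx⟩
      else p.2 ⟨(x : ℕ) - m * r, hsub x hx⟩ with hF
  have hblock : ∀ (i : Fin m) (j : Fin r), (i : ℕ) * r + (j : ℕ) < m * r := by
    intro i j
    calc (i : ℕ) * r + (j : ℕ) < (i : ℕ) * r + r := Nat.add_lt_add_left j.isLt _
    _ = ((i : ℕ) + 1) * r := by ring
    _ ≤ m * r := Nat.mul_le_mul_right r i.isLt
  have hblockn : ∀ (i : Fin m) (j : Fin r), (i : ℕ) * r + (j : ℕ) < n :=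
    fun i j => lt_of_lt_of_le (hblock i j) h
  have hquot : ∀ (i : Fin m) (j : Fin r), ((i : ℕ) * r + (j : ℕ)) / r = i := by
    intro i j
    rw [Nat.mul_comm (i : ℕ) r, Nat.mul_add_div hr, Nat.div_eq_of_lt j.isLt, Nat.add_zero]
  -- F lands in the subtype
  have hmem : ∀ p, ∀ k : Fin m,
      r ≤ (Finset.univ.filter fun x => F p x = k).card := by
    intro p k
    set e : Fin r → Fin n := fun j => ⟨(p.1.symm k : ℕ) * r + j, hblockn _ j⟩ with he
    have hei : Function.Injective e := by
      intro a b hab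
      have h' := congrArg Fin.val hab
      simp only [he] at h'
      exact Fin.ext (by omega)
    have hefib : ∀ j, F p (e j) = k := by
      intro j
      have hx : ((e j : Fin n) : ℕ) < m * r := hblock _ j
      simp only [hF, he, dif_pos hx]
      have : (((p.1.symm k : ℕ) * r + (j : ℕ)) / r) = (p.1.symm k : ℕ) := hquot _ j
      have hfin : (⟨((p.1.symm k : ℕ) * r + (j : ℕ)) / r, hdiv _ hx⟩ : Fin m) = p.1.symm k :=
        Fin.ext this
      rw [dif_pos (hblock _ j), hfin]
      exact p.1.apply_symm_apply k
    calc r = (Finset.univ : Finset (Fin r)).card := by simp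
    _ = (Finset.univ.image e).card := (Finset.card_image_of_injective _ hei).symm
    _ ≤ (Finset.univ.filter fun x => F p x = k).card := by
        apply Finset.card_le_card
        intro x hx
        simp only [Finset.mem_image] at hx
        obtain ⟨j, _, rfl⟩ := hx
        simp [hefib j]
  set G : Equiv.Perm (Fin m) × (Fin (n - m * r) → Fin m) →
      {f : Fin n → Fin m // ∀ k : Fin m, r ≤ (Finset.univ.filter fun x => f x = k).card} :=
    fun p => ⟨F p, hmem p⟩ with hG
  have hGinj : Function.Injective G := by
    intro p q hpq
    have hfq : F p = F q := congrArg Subtype.val hpq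
    have h1 : p.1 = q.1 := by
      apply Equiv.ext
      intro i
      have hi : (i : ℕ) * r < n := by
        have := hblockn i ⟨0, hr⟩
        simpa using this
      have hx : ((⟨(i : ℕ) * r, hi⟩ : Fin n) : ℕ) < m * r := by
        have := hblock i ⟨0, hr⟩
        simpa using this
      have := congrFun hfq ⟨(i : ℕ) * r, hi⟩
      simp only [hF, dif_pos hx] at this
      have hq : ((i : ℕ) * r) / r = (i : ℕ) := by
        have := hquot i ⟨0, hr⟩
        simpa using this
      have hfin : (⟨((i : ℕ) * r) / r, hdiv _ hx⟩ : Fin m) = i := Fin.ext hq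
      rwa [hfin] at this
    have h2 : p.2 = q.2 := by
      funext y
      have hy : m * r + (y : ℕ) < n := by
        have := y.isLt
        omega
      have hx : ¬ ((⟨m * r + (y : ℕ), hy⟩ : Fin n) : ℕ) < m * r := by simp
      have := congrFun hfq ⟨m * r + (y : ℕ), hy⟩
      simp only [hF, dif_neg hx] at this
      have hfin : (⟨m * r + (y : ℕ) - m * r, hsub _ hx⟩ : Fin (n - m * r)) = y :=
        Fin.ext (by simp)
      rwa [hfin] at this
    exact Prod.ext h1 h2
  have hcard := Nat.card_le_card_of_injective G hGinj
  have hdom : Nat.card (Equiv.Perm (Fin m) × (Fin (n - m * r) → Fin m)) =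
      Nat.factorial m * m ^ (n - m * r) := by
    simp [Nat.card_eq_fintype_card, Fintype.card_perm]
  rwa [hdom] at hcard
end

section
/- Fix d and t ≥ 2, and let (n_1,...,n_t) be an (n,d)-admissible tuple with n_i < d − 1 for some index i and with at least one coordinate equal to d. If n is sufficiently large with respect to d and t, then |M_{n̄}| < |M_{n̄'}|, where n̄' agrees with n̄ except n'_i = n_i + 1. Here |M_{n̄}| is given by the multinomial-Stirling formula of the counting lemma. -/
open Finset

/-- Size of the model class `M_{n̄}` given by the multinomial–Stirling counting formula. -/
noncomputable def classSize (n d t : ℕ) (nb : Fin t → ℕ) : ℕ :=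
  let low : Finset (Fin t) := Finset.univ.filter fun i => nb i < d
  let m : ℕ := n - ∑ i ∈ low, nb i
  let kd : ℕ := t - low.card
  Nat.factorial n / ((∏ i ∈ low, Nat.factorial (nb i)) * Nat.factorial m) *
    Nat.factorial kd * stirlingGe m kd d

-- auxiliary developments


open scoped Classical in
noncomputable def PartF (M k d : ℕ) : Finset (Finset (Finset (Fin M))) :=
  univ.filter (fun P => P.card = k ∧ (∀ b ∈ P, d ≤ b.card) ∧ ∀ x : Fin M, ∃! b, b ∈ P ∧ x ∈ b)

open scoped Classical in
theorem stirlingGe_eq (M k d : ℕ) : stirlingGe M k d = (PartF M k d).card := by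
  rw [stirlingGe, Set.ncard_eq_toFinset_card', Set.toFinset_setOf, PartF]

section
variable {M k d : ℕ}

def fiberF (f : Fin M → Fin k) (j : Fin k) : Finset (Fin M) :=
  univ.filter (fun x => f x = j)

lemma mem_fiberF {f : Fin M → Fin k} {j x} : x ∈ fiberF f j ↔ f x = j := by
  simp [fiberF]

noncomputable def PhiF (f : Fin M → Fin k) : Finset (Finset (Fin M)) :=
  univ.image (fiberF f)

open scoped Classical in
noncomputable def GoodF (M k d : ℕ) : Finset (Fin M → Fin k) :=
  univ.filter (fun f => ∀ j, d ≤ (fiberF f j).card)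

open scoped Classical in
noncomputable def BadF (M k d : ℕ) : Finset (Fin M → Fin k) :=
  univ.filter (fun f => ¬ ∀ j, d ≤ (fiberF f j).card)

open scoped Classical in
noncomputable def SubF (M d : ℕ) : Finset (Finset (Fin M)) :=
  univ.powerset.filter (fun s => s.card < d)
end
lemma PhiF_surj {P : Finset (Finset (Fin M))} (hPk : P.card = k)
    (hPd : ∀ b ∈ P, d ≤ b.card) (hP3 : ∀ x : Fin M, ∃! b, b ∈ P ∧ x ∈ b) :
    ∃ f : Fin M → Fin k, (∀ j, d ≤ (fiberF f j).card) ∧ PhiF f = P := by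
  classical
  have hbl : ∀ x : Fin M, ∃ b, b ∈ P ∧ x ∈ b := fun x => (hP3 x).exists
  set bl : Fin M → Finset (Fin M) := fun x => (hbl x).choose with hbldef
  have hblP : ∀ x, bl x ∈ P := fun x => (hbl x).choose_spec.1
  have hblx : ∀ x, x ∈ bl x := fun x => (hbl x).choose_spec.2
  have hbluniq : ∀ x (b : Finset (Fin M)), b ∈ P → x ∈ b → b = bl x := by
    intro x b hb hxb
    exact ((hP3 x).unique ⟨hb, hxb⟩ ⟨hblP x, hblx x⟩)
  let e : {y // y ∈ P} ≃ Fin k := P.equivFinOfCardEq hPk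
  have hfib : ∀ j, fiberF (fun x => e ⟨bl x, hblP x⟩) j = (e.symm j).1 := by
    intro j
    ext x
    rw [mem_fiberF]
    constructor
    · intro h
      have h2 : (⟨bl x, hblP x⟩ : {y // y ∈ P}) = e.symm j := by
        rw [← h, Equiv.symm_apply_apply]
      have hb : bl x = (e.symm j).1 := congrArg Subtype.val h2
      exact hb ▸ hblx x
    · intro hx
      have h1 : (e.symm j).1 = bl x := hbluniq x _ (e.symm j).2 hx
      have h2 : (⟨bl x, hblP x⟩ : {y // y ∈ P}) = e.symm j := Subtype.ext h1.symm
      rw [h2, Equiv.apply_symm_apply]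
  refine ⟨fun x => e ⟨bl x, hblP x⟩, ?_, ?_⟩
  · intro j
    rw [hfib j]
    exact hPd _ (e.symm j).2
  · ext b
    simp only [PhiF, Finset.mem_image]
    constructor
    · rintro ⟨j, -, rfl⟩
      rw [hfib j]
      exact (e.symm j).2
    · intro hb
      refine ⟨e ⟨b, hb⟩, mem_univ _, ?_⟩
      rw [hfib (e ⟨b, hb⟩), Equiv.symm_apply_apply]

lemma fiberF_injOn (f : Fin M → Fin k) (hd : 1 ≤ d) (hf : ∀ j, d ≤ (fiberF f j).card) :
    Function.Injective (fiberF f) := by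
  intro j j' h
  have hj := hf j
  obtain ⟨x, hx⟩ := Finset.card_pos.mp (lt_of_lt_of_le hd hj)
  have h1 : f x = j := mem_fiberF.mp hx
  have h2 : f x = j' := mem_fiberF.mp (h ▸ hx)
  rw [← h1, h2]

open scoped Classical in
lemma PhiF_good (hd : 1 ≤ d) (f : Fin M → Fin k) (hf : ∀ j, d ≤ (fiberF f j).card) :
    (PhiF f).card = k ∧ (∀ b ∈ PhiF f, d ≤ b.card) ∧
      ∀ x : Fin M, ∃! b, b ∈ PhiF f ∧ x ∈ b := by
  refine ⟨?_, ?_, ?_⟩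
  · rw [PhiF, Finset.card_image_of_injective _ (fiberF_injOn f hd hf), card_univ,
      Fintype.card_fin]
  · rintro b hb
    obtain ⟨j, -, rfl⟩ := Finset.mem_image.mp hb
    exact hf j
  · intro x
    refine ⟨fiberF f (f x), ⟨Finset.mem_image.mpr ⟨f x, mem_univ _, rfl⟩, mem_fiberF.mpr rfl⟩, ?_⟩
    rintro b ⟨hb, hxb⟩
    obtain ⟨j, -, rfl⟩ := Finset.mem_image.mp hb
    rw [mem_fiberF.mp hxb]

lemma PhiF_fiber_card (hd : 1 ≤ d) {P : Finset (Finset (Fin M))} (hPk : P.card = k)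
    (hPd : ∀ b ∈ P, d ≤ b.card) (S : Finset (Fin M → Fin k))
    (hS : ∀ f ∈ S, PhiF f = P) : S.card ≤ k ^ k := by
  classical
  rcases Nat.eq_zero_or_pos M with hM | hM
  · subst hM
    have : S.card ≤ (univ : Finset (Fin 0 → Fin k)).card := Finset.card_le_univ S
    simp only [card_univ, Fintype.card_fun, Fintype.card_fin, pow_zero] at this
    calc S.card ≤ 1 := this
      _ ≤ k ^ k := by
          rcases Nat.eq_zero_or_pos k with h | h
          · simp [h]
          · exact pow_pos h k
  · have x0 : Fin M := ⟨0, hM⟩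
    have hne : ∀ b ∈ P, b.Nonempty := fun b hb =>
      Finset.card_pos.mp (lt_of_lt_of_le hd (hPd b hb))
    let rep' : Finset (Fin M) → Fin M := fun b => if h : b.Nonempty then h.choose else x0
    have hrep' : ∀ b : Finset (Fin M), b.Nonempty → rep' b ∈ b := by
      intro b h
      simp only [rep', dif_pos h]
      exact h.choose_spec
    let e : {y // y ∈ P} ≃ Fin k := P.equivFinOfCardEq hPk
    let rep : Fin k → Fin M := fun j => rep' (e.symm j).1
    have hrep : ∀ (b : Finset (Fin M)) (hb : b ∈ P), rep (e ⟨b, hb⟩) ∈ b := by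
      intro b hb
      have h2 : (e.symm (e ⟨b, hb⟩)).1 = b :=
        congrArg Subtype.val (Equiv.symm_apply_apply e _)
      show rep' (e.symm (e ⟨b, hb⟩)).1 ∈ b
      rw [h2]
      exact hrep' b (hne b hb)
    have key : ∀ f ∈ S, ∀ (b : Finset (Fin M)) (hb : b ∈ P), ∀ x ∈ b,
        f x = f (rep (e ⟨b, hb⟩)) := by
      intro f hf b hb x hx
      have hb' : b ∈ PhiF f := (hS f hf).symm ▸ hb
      obtain ⟨v, -, rfl⟩ := Finset.mem_image.mp hb'
      rw [mem_fiberF.mp hx, mem_fiberF.mp (hrep _ hb)]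
    have hinj : Set.InjOn (fun f : Fin M → Fin k => (fun j => f (rep j))) S := by
      intro f hf g hg h
      funext x
      have hbP : fiberF f (f x) ∈ P := by
        rw [← hS f hf]
        exact Finset.mem_image.mpr ⟨f x, mem_univ _, rfl⟩
      have hxb : x ∈ fiberF f (f x) := mem_fiberF.mpr rfl
      calc f x = f (rep (e ⟨_, hbP⟩)) := key f hf _ hbP x hxb
        _ = g (rep (e ⟨_, hbP⟩)) := congrFun h _
        _ = g x := (key g hg _ hbP x hxb).symm
    calc S.card ≤ (univ : Finset (Fin k → Fin k)).card :=
          Finset.card_le_card_of_injOn _ (fun _ _ => mem_univ _) hinj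
      _ = k ^ k := by simp [Fintype.card_fun]

lemma good_add_bad (M k d : ℕ) : (GoodF M k d).card + (BadF M k d).card = k ^ M := by
  classical
  rw [GoodF, BadF]
  rw [Finset.card_filter_add_card_filter_not]
  · simp [Fintype.card_fun]


lemma subF_card (hM : 1 ≤ M) (hd : 1 ≤ d) : (SubF M d).card ≤ d * M ^ (d - 1) := by
  classical
  have h1 : SubF M d = (Finset.range d).biUnion
      (fun j => Finset.powersetCard j (univ : Finset (Fin M))) := by
    ext s
    simp only [SubF, Finset.mem_filter, Finset.mem_powerset, Finset.mem_biUnion,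
      Finset.mem_range, Finset.mem_powersetCard]
    constructor
    · rintro ⟨-, h⟩
      exact ⟨s.card, h, subset_univ s, rfl⟩
    · rintro ⟨j, hj, -, rfl⟩
      exact ⟨subset_univ s, hj⟩
  rw [h1, Finset.card_biUnion]
  · calc ∑ j ∈ Finset.range d, (Finset.powersetCard j (univ : Finset (Fin M))).card
        = ∑ j ∈ Finset.range d, M.choose j := by
          simp [Finset.card_powersetCard]
      _ ≤ ∑ j ∈ Finset.range d, M ^ (d - 1) := by
          apply Finset.sum_le_sum
          intro j hj
          rw [Finset.mem_range] at hj
          calc M.choose j ≤ M ^ j := Nat.choose_le_pow M j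
            _ ≤ M ^ (d - 1) := Nat.pow_le_pow_right hM (by omega)
      _ = d * M ^ (d - 1) := by simp [mul_comm]
  · intro x hx y hy hxy
    apply Finset.disjoint_left.mpr
    intro s hs hs'
    rw [Finset.mem_powersetCard] at hs hs'
    exact hxy (hs.2 ▸ hs'.2)

lemma badF_card (hk : 2 ≤ k) :
    (BadF M k d).card ≤ k * ((SubF M d).card * (k - 1) ^ M) := by
  classical
  have hk0 : (0:ℕ) < k := by omega
  let jf : (Fin M → Fin k) → Fin k := fun f =>
    if hf : ∃ j, (fiberF f j).card < d then hf.choose else ⟨0, hk0⟩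
  have hjf : ∀ f ∈ BadF M k d, (fiberF f (jf f)).card < d := by
    intro f hf
    rw [BadF, Finset.mem_filter] at hf
    have hex : ∃ j, (fiberF f j).card < d := by
      push_neg at hf
      exact hf.2.imp (fun j hj => hj)
    simp only [jf, dif_pos hex]
    exact hex.choose_spec
  let dmap : Fin k → Fin k → Fin (k - 1) := fun j v =>
    ⟨if v.1 < j.1 then v.1 else min (v.1 - 1) (k - 2), by
      split
      · omega
      · omega⟩
  let Ψ : (Fin M → Fin k) → Fin k × Finset (Fin M) × (Fin M → Fin (k - 1)) :=
    fun f => (jf f, fiberF f (jf f), fun x => dmap (jf f) (f x))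
  have hmaps : ∀ f ∈ BadF M k d,
      Ψ f ∈ (univ : Finset (Fin k)) ×ˢ (SubF M d) ×ˢ (univ : Finset (Fin M → Fin (k-1))) := by
    intro f hf
    simp only [Ψ, Finset.mem_product, Finset.mem_univ, true_and, and_true]
    rw [SubF, Finset.mem_filter]
    exact ⟨Finset.mem_powerset.mpr (subset_univ _), hjf f hf⟩
  have hinj : Set.InjOn Ψ (BadF M k d) := by
    intro f hf g hg h
    simp only [Ψ, Prod.mk.injEq] at h
    obtain ⟨h1, h2, h3⟩ := h
    funext x
    by_cases hx : x ∈ fiberF f (jf f)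
    · have hfx : f x = jf f := mem_fiberF.mp hx
      have hgx : g x = jf g := mem_fiberF.mp (h2 ▸ hx)
      rw [hfx, hgx, h1]
    · have hfx : f x ≠ jf f := fun hc => hx (mem_fiberF.mpr hc)
      have hgx : g x ≠ jf g := by
        intro hc
        apply hx
        rw [h2]
        exact mem_fiberF.mpr hc
      have hv := congrFun h3 x
      simp only [dmap] at hv
      have hv' := congrArg Fin.val hv
      simp only at hv'
      have e1 : (f x).1 < k := (f x).2
      have e2 : (g x).1 < k := (g x).2
      have e3 : (jf f).1 < k := (jf f).2
      have e4 : (f x).1 ≠ (jf f).1 := fun hc => hfx (Fin.ext hc)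
      have e5 : (g x).1 ≠ (jf g).1 := fun hc => hgx (Fin.ext hc)
      have e6 : (jf f).1 = (jf g).1 := congrArg Fin.val h1
      apply Fin.ext
      rw [e6] at e3
      simp only [Nat.min_def] at hv'
      split_ifs at hv' <;> omega
  calc (BadF M k d).card
      ≤ ((univ : Finset (Fin k)) ×ˢ (SubF M d) ×ˢ (univ : Finset (Fin M → Fin (k-1)))).card :=
        Finset.card_le_card_of_injOn Ψ hmaps hinj
    _ = k * ((SubF M d).card * (k - 1) ^ M) := by
        simp [Finset.card_product, Fintype.card_fun]

lemma ev_poly_geom (c e q K : ℕ) (h : q < K) :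
    ∃ N : ℕ, ∀ M : ℕ, N ≤ M → c * M ^ e * q ^ M ≤ K ^ M := by
  have hK0 : 0 < K := by omega
  have hK : (0:ℝ) < (K:ℝ) := by exact_mod_cast hK0
  set r : ℝ := (q:ℝ) / K with hr
  have hr0 : 0 ≤ r := by positivity
  have hr1 : r < 1 := by
    rw [hr, div_lt_one hK]
    exact_mod_cast h
  have hnorm : ‖r‖ < 1 := by rwa [Real.norm_eq_abs, abs_of_nonneg hr0]
  have hsum : Summable (fun M : ℕ => (M:ℝ) ^ e * r ^ M) :=
    summable_pow_mul_geometric_of_norm_lt_one e hnorm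
  have htend : Filter.Tendsto (fun M : ℕ => (M:ℝ) ^ e * r ^ M) Filter.atTop (nhds 0) :=
    hsum.tendsto_atTop_zero
  have heps : (0:ℝ) < 1 / (c + 1) := by positivity
  have hev : ∀ᶠ M : ℕ in Filter.atTop, (M:ℝ) ^ e * r ^ M < 1 / (c + 1) :=
    htend.eventually_lt_const heps
  obtain ⟨N, hN⟩ := Filter.eventually_atTop.mp hev
  refine ⟨N, fun M hM => ?_⟩
  have hlt := hN M hM
  have hq : ((q:ℝ)) ^ M = r ^ M * (K:ℝ) ^ M := by
    rw [hr, div_pow, div_mul_cancel₀]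
    positivity
  have hreal : (c:ℝ) * (M:ℝ) ^ e * (q:ℝ) ^ M ≤ (K:ℝ) ^ M := by
    rw [hq]
    calc (c:ℝ) * (M:ℝ) ^ e * (r ^ M * (K:ℝ) ^ M)
        = (c:ℝ) * ((M:ℝ) ^ e * r ^ M) * (K:ℝ) ^ M := by ring
      _ ≤ (c:ℝ) * (1 / (c+1)) * (K:ℝ) ^ M := by
          apply mul_le_mul_of_nonneg_right _ (by positivity)
          apply mul_le_mul_of_nonneg_left hlt.le (by positivity)
      _ ≤ 1 * (K:ℝ) ^ M := by
          apply mul_le_mul_of_nonneg_right _ (by positivity)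
          rw [mul_one_div, div_le_one (by positivity)]
          linarith
      _ = (K:ℝ) ^ M := one_mul _
  exact_mod_cast hreal

section
variable {M k d : ℕ}

lemma part_le_good : (PartF M k d).card ≤ (GoodF M k d).card := by
  classical
  apply Finset.card_le_card_of_surjOn PhiF
  intro P hP
  simp only [PartF, Finset.mem_coe, Finset.mem_filter] at hP
  obtain ⟨-, h1, h2, h3⟩ := hP
  obtain ⟨f, hf, hPf⟩ := PhiF_surj h1 h2 h3
  refine ⟨f, ?_, hPf⟩
  simp only [GoodF, Finset.mem_coe, Finset.mem_filter]
  exact ⟨mem_univ _, hf⟩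

lemma good_le_pow : (GoodF M k d).card ≤ k ^ M := by
  calc (GoodF M k d).card ≤ (univ : Finset (Fin M → Fin k)).card := Finset.card_le_univ _
    _ = k ^ M := by simp [Fintype.card_fun]

lemma good_le_mul_part (hd : 1 ≤ d) :
    (GoodF M k d).card ≤ k ^ k * (PartF M k d).card := by
  classical
  apply Finset.card_le_mul_card_image_of_maps_to (f := PhiF)
  · intro f hf
    simp only [GoodF, Finset.mem_filter] at hf
    simp only [PartF, Finset.mem_filter]
    exact ⟨mem_univ _, PhiF_good hd f hf.2⟩
  · intro P hP
    simp only [PartF, Finset.mem_filter] at hP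
    obtain ⟨-, h1, h2, -⟩ := hP
    apply PhiF_fiber_card hd h1 h2
    intro f hf
    simp only [Finset.mem_filter] at hf
    exact hf.2

lemma badF_card_one (hk1 : k = 1) (hMd : d ≤ M) : (BadF M k d).card = 0 := by
  classical
  subst hk1
  rw [Finset.card_eq_zero]
  rw [Finset.eq_empty_iff_forall_notMem]
  intro f hf
  simp only [BadF, Finset.mem_filter] at hf
  apply hf.2
  intro j
  have : fiberF f j = univ := by
    ext x
    simp only [mem_fiberF, mem_univ, iff_true]
    exact Subsingleton.elim _ _
  rw [this, card_univ, Fintype.card_fin]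
  exact hMd
end

lemma key_ineq (d k : ℕ) (hd : 1 ≤ d) :
    ∃ N : ℕ, ∀ m : ℕ, N ≤ m → 1 ≤ k →
      d * stirlingGe m k d < m * stirlingGe (m - 1) k d := by
  rcases Nat.lt_or_ge k 1 with hk | hk
  · exact ⟨0, fun m _ h1 => absurd h1 (by omega)⟩
  obtain ⟨N0, hN0⟩ := ev_poly_geom (2 * k * d) (d - 1) (k - 1) k (by omega)
  refine ⟨N0 + d + 2 * d * k ^ (k + 1) + 2, fun m hm _ => ?_⟩
  set M := m - 1 with hM
  have hm1 : 1 ≤ m := by omega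
  have hmM : m = M + 1 := by omega
  have hMge : N0 ≤ M ∧ d ≤ M ∧ 1 ≤ M := by omega
  -- bad bound
  have hbad : 2 * (BadF M k d).card ≤ k ^ M := by
    rcases Nat.lt_or_ge k 2 with hk2 | hk2
    · have : k = 1 := by omega
      rw [badF_card_one this hMge.2.1]
      simp
    · have h1 : (BadF M k d).card ≤ k * ((SubF M d).card * (k - 1) ^ M) := badF_card hk2
      have h2 : (SubF M d).card ≤ d * M ^ (d - 1) := subF_card hMge.2.2 hd
      have h3 : 2 * (k * ((d * M ^ (d-1)) * (k - 1) ^ M)) ≤ k ^ M := by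
        have := hN0 M hMge.1
        calc 2 * (k * ((d * M ^ (d-1)) * (k - 1) ^ M))
            = 2 * k * d * M ^ (d-1) * (k-1) ^ M := by ring
          _ ≤ k ^ M := this
      calc 2 * (BadF M k d).card ≤ 2 * (k * ((SubF M d).card * (k - 1) ^ M)) := by
            omega
        _ ≤ 2 * (k * ((d * M ^ (d-1)) * (k - 1) ^ M)) := by
            have := Nat.mul_le_mul_right ((k-1)^M) h2
            have := Nat.mul_le_mul_left k this
            omega
        _ ≤ k ^ M := h3
  -- chain
  have hU : stirlingGe m k d ≤ k * k ^ M := by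
    rw [stirlingGe_eq]
    calc (PartF m k d).card ≤ (GoodF m k d).card := part_le_good
      _ ≤ k ^ m := good_le_pow
      _ = k * k ^ M := by rw [hmM, pow_succ, mul_comm]
  have hL : k ^ M ≤ k ^ k * stirlingGe M k d + (BadF M k d).card := by
    rw [stirlingGe_eq]
    have h1 := good_add_bad M k d
    have h2 : (GoodF M k d).card ≤ k ^ k * (PartF M k d).card := good_le_mul_part hd
    omega
  -- final arithmetic
  set A := stirlingGe m k d
  set B := stirlingGe (m-1) k d with hB
  set P := k ^ M with hPdef
  set Q := k ^ k with hQdef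
  have hP1 : 1 ≤ P := Nat.one_le_iff_ne_zero.mpr (pow_ne_zero _ (by omega))
  have hQ1 : 1 ≤ Q := Nat.one_le_iff_ne_zero.mpr (pow_ne_zero _ (by omega))
  have hP2Q : P ≤ 2 * (Q * B) := by omega
  have hmbig : 2 * d * k * Q < m := by
    have heq : 2 * d * k ^ (k+1) = 2 * d * k * Q := by rw [hQdef, pow_succ]; ring
    omega
  have hmain : (2 * Q) * (d * A) < (2 * Q) * (m * B) := by
    calc (2 * Q) * (d * A) ≤ (2 * Q) * (d * (k * P)) := by
          apply Nat.mul_le_mul_left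
          exact Nat.mul_le_mul_left d hU
      _ = (2 * d * k * Q) * P := by ring
      _ < m * P := by
          apply Nat.mul_lt_mul_of_lt_of_le hmbig (le_refl P) (by omega)
      _ ≤ m * (2 * (Q * B)) := Nat.mul_le_mul_left m hP2Q
      _ = (2 * Q) * (m * B) := by ring
  exact Nat.lt_of_mul_lt_mul_left hmain



lemma classSize_eq (n d t : ℕ) (nb : Fin t → ℕ) :
    classSize n d t nb =
      Nat.factorial n /
        ((∏ i ∈ (Finset.univ.filter fun i => nb i < d), Nat.factorial (nb i)) *
          Nat.factorial (n - ∑ i ∈ (Finset.univ.filter fun i => nb i < d), nb i)) *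
        Nat.factorial (t - (Finset.univ.filter fun i => nb i < d).card) *
        stirlingGe (n - ∑ i ∈ (Finset.univ.filter fun i => nb i < d), nb i)
          (t - (Finset.univ.filter fun i => nb i < d).card) d := rfl


/-- If `n` is sufficiently large w.r.t. `d` and `t`, then for any `(n,d)`-admissible
tuple with some coordinate equal to `d` and a coordinate `n_i < d - 1`, increasing
that coordinate by one strictly increases the class size. -/
theorem stmt_8 (d t : ℕ) (hd : 0 < d) (ht : 2 ≤ t) :
    ∃ N : ℕ, ∀ n : ℕ, N ≤ n → ∀ nb : Fin t → ℕ,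
      (∀ j, nb j ≤ d) → (∑ j, nb j ≤ n) →
      ((∃ j, nb j = d) ∨ ∑ j, nb j = n) →
      (∃ j, nb j = d) →
      ∀ i : Fin t, nb i < d - 1 →
        classSize n d t nb < classSize n d t (Function.update nb i (nb i + 1)) := by
  have hkey := fun k => key_ineq d k hd
  choose Nf hNf using hkey
  refine ⟨(Finset.range (t+1)).sup Nf + t * d + 1, ?_⟩
  intro n hn nb hub hsum _hadm hex i hi
  have hd2 : 2 ≤ d := by omega
  set nb' := Function.update nb i (nb i + 1) with hnb'
  set low := (Finset.univ.filter fun j : Fin t => nb j < d) with hlowdef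
  have h_i_low : i ∈ low := by
    rw [hlowdef, Finset.mem_filter]
    exact ⟨Finset.mem_univ _, by omega⟩
  have hcond : ∀ j, (nb' j < d ↔ nb j < d) := by
    intro j
    by_cases h : j = i
    · subst h; simp only [hnb', Function.update_self]; omega
    · simp only [hnb', Function.update_of_ne h]
  have hlow' : (Finset.univ.filter fun j : Fin t => nb' j < d) = low := by
    rw [hlowdef]
    apply Finset.filter_congr
    intro j _
    simp [hcond j]
  set a := ∑ j ∈ low, nb j with ha
  have ha_n : a ≤ n := by
    calc a ≤ ∑ j, nb j := Finset.sum_le_sum_of_subset (Finset.subset_univ low)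
      _ ≤ n := hsum
  have hcardlow : low.card ≤ t := by
    calc low.card ≤ (Finset.univ : Finset (Fin t)).card := Finset.card_le_univ low
      _ = t := by simp
  have ha_td : a ≤ t * d := by
    calc a ≤ ∑ _j ∈ low, d := Finset.sum_le_sum (fun j _ => hub j)
      _ = low.card * d := by rw [Finset.sum_const, smul_eq_mul]
      _ ≤ t * d := Nat.mul_le_mul_right d hcardlow
  have herase : ∀ (f : Fin t → ℕ), ∑ j ∈ low.erase i, f j = ∑ j ∈ low.erase i, f j := fun _ => rfl
  have hsame : ∑ j ∈ low.erase i, nb' j = ∑ j ∈ low.erase i, nb j := by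
    apply Finset.sum_congr rfl
    intro j hj
    have : j ≠ i := Finset.ne_of_mem_erase hj
    simp [hnb', Function.update_of_ne this]
  have hsum' : ∑ j ∈ low, nb' j = a + 1 := by
    have h1 := Finset.add_sum_erase low nb' h_i_low
    have h2 := Finset.add_sum_erase low nb h_i_low
    have h3 : nb' i = nb i + 1 := by simp [hnb']
    omega
  set P := ∏ j ∈ low, Nat.factorial (nb j) with hP
  have hprod' : ∏ j ∈ low, Nat.factorial (nb' j) = (nb i + 1) * P := by
    have hsamep : ∏ j ∈ low.erase i, Nat.factorial (nb' j)
        = ∏ j ∈ low.erase i, Nat.factorial (nb j) := by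
      apply Finset.prod_congr rfl
      intro j hj
      have : j ≠ i := Finset.ne_of_mem_erase hj
      simp [hnb', Function.update_of_ne this]
    have h1 := Finset.mul_prod_erase low (fun j => Nat.factorial (nb' j)) h_i_low
    have h2 := Finset.mul_prod_erase low (fun j => Nat.factorial (nb j)) h_i_low
    have h3 : nb' i = nb i + 1 := by simp [hnb']
    rw [hP, ← h1, ← h2, hsamep, h3, Nat.factorial_succ]
    ring
  set kd := t - low.card with hkd
  have hkd1 : 1 ≤ kd := by
    obtain ⟨j, hj⟩ := hex
    have hjlow : j ∉ low := by
      rw [hlowdef, Finset.mem_filter]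
      omega
    have : low.card < t := by
      have hss : low ⊂ Finset.univ :=
        ⟨Finset.subset_univ low, fun h => hjlow (h (Finset.mem_univ j))⟩
      have := Finset.card_lt_card hss
      simpa using this
    omega
  have hkdt : kd ≤ t := by omega
  set m := n - a with hm
  have hm_large : Nf kd ≤ m ∧ 1 ≤ m := by
    have h1 : Nf kd ≤ (Finset.range (t+1)).sup Nf :=
      Finset.le_sup (Finset.mem_range.mpr (by omega))
    omega
  have keyineq := hNf kd m hm_large.1 hkd1
  have hPpos : 0 < P := Finset.prod_pos (fun j _ => Nat.factorial_pos _)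
  have hamn : a + m = n := by omega
  have hdvd1 : P * Nat.factorial m ∣ Nat.factorial n := by
    have h1 : P ∣ Nat.factorial a := by
      rw [hP, ha]
      exact Nat.prod_factorial_dvd_factorial_sum low nb
    calc P * Nat.factorial m ∣ Nat.factorial a * Nat.factorial m :=
          mul_dvd_mul_right h1 _
      _ ∣ Nat.factorial (a + m) := Nat.factorial_mul_factorial_dvd_factorial_add a m
      _ = Nat.factorial n := by rw [hamn]
  have hdvd2 : ((nb i + 1) * P) * Nat.factorial (m - 1) ∣ Nat.factorial n := by
    have h1 : (nb i + 1) * P ∣ Nat.factorial (a + 1) := by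
      rw [← hprod']
      have := Nat.prod_factorial_dvd_factorial_sum low nb'
      rwa [hsum'] at this
    calc ((nb i + 1) * P) * Nat.factorial (m - 1)
        ∣ Nat.factorial (a + 1) * Nat.factorial (m - 1) := mul_dvd_mul_right h1 _
      _ ∣ Nat.factorial ((a + 1) + (m - 1)) :=
          Nat.factorial_mul_factorial_dvd_factorial_add _ _
      _ = Nat.factorial n := by congr 1; omega
  set A := Nat.factorial n / (P * Nat.factorial m) with hA
  set B := Nat.factorial n / (((nb i + 1) * P) * Nat.factorial (m - 1)) with hB
  have hAe : A * (P * Nat.factorial m) = Nat.factorial n := Nat.div_mul_cancel hdvd1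
  have hBe : B * (((nb i + 1) * P) * Nat.factorial (m - 1)) = Nat.factorial n :=
    Nat.div_mul_cancel hdvd2
  have hApos : 0 < A :=
    Nat.div_pos (Nat.le_of_dvd (Nat.factorial_pos n) hdvd1)
      (Nat.mul_pos hPpos (Nat.factorial_pos m))
  have hABrel : A * m = B * (nb i + 1) := by
    have e1 : A * (P * Nat.factorial m) =
        (A * m) * (P * Nat.factorial (m - 1)) := by
      rw [← Nat.mul_factorial_pred (Nat.one_le_iff_ne_zero.mp hm_large.2)]
      ring
    have e2 : B * (((nb i + 1) * P) * Nat.factorial (m - 1)) =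
        (B * (nb i + 1)) * (P * Nat.factorial (m - 1)) := by ring
    have := hAe.trans hBe.symm
    rw [e1, e2] at this
    exact Nat.eq_of_mul_eq_mul_right (Nat.mul_pos hPpos (Nat.factorial_pos _)) this
  have hfinal : A * stirlingGe m kd d < B * stirlingGe (m - 1) kd d := by
    have h1 : (nb i + 1) * (A * stirlingGe m kd d) <
        (nb i + 1) * (B * stirlingGe (m - 1) kd d) := by
      calc (nb i + 1) * (A * stirlingGe m kd d)
          = A * ((nb i + 1) * stirlingGe m kd d) := by ring
        _ ≤ A * (d * stirlingGe m kd d) := by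
            apply Nat.mul_le_mul_left
            apply Nat.mul_le_mul_right
            omega
        _ < A * (m * stirlingGe (m - 1) kd d) := by
            exact (Nat.mul_lt_mul_left hApos).mpr keyineq
        _ = (A * m) * stirlingGe (m - 1) kd d := by ring
        _ = (B * (nb i + 1)) * stirlingGe (m - 1) kd d := by rw [hABrel]
        _ = (nb i + 1) * (B * stirlingGe (m - 1) kd d) := by ring
    exact Nat.lt_of_mul_lt_mul_left h1
  rw [classSize_eq, classSize_eq]
  rw [hlow']
  rw [hsum', hprod']
  rw [← hlowdef, ← ha, ← hP, ← hkd, ← hm]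
  have hmm : n - (a + 1) = m - 1 := by omega
  rw [hmm, ← hA, ← hB]
  calc A * Nat.factorial kd * stirlingGe m kd d
      = Nat.factorial kd * (A * stirlingGe m kd d) := by ring
    _ < Nat.factorial kd * (B * stirlingGe (m - 1) kd d) :=
        (Nat.mul_lt_mul_left (Nat.factorial_pos kd)).mpr hfinal
    _ = B * Nat.factorial kd * stirlingGe (m - 1) kd d := by ring
end

section
/- For every positive integer n, √(2πn)·(n/e)^n·e^(1/(12n+1)) < n! < √(2πn)·(n/e)^n·e^(1/(12n)). -/
open Real

namespace RobbinsAux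

open Filter Topology Stirling

noncomputable def s (n : ℕ) : ℝ := Real.log (Stirling.stirlingSeq n)

/-- lower bound on successive differences: first term of the series. -/
lemma diff_lower (m : ℕ) :
    (1 / (2 * (↑(m + 1) : ℝ) + 1)) ^ 2 / 3 ≤ s (m + 1) - s (m + 2) := by
  have h := Stirling.log_stirlingSeq_diff_hasSum m
  have h0 := le_hasSum h 0 (fun j _ => by positivity)
  have he : (1:ℝ) / (2 * (↑(0 + 1) : ℕ) + 1) * ((1 / (2 * (↑(m + 1) : ℝ) + 1)) ^ 2) ^ (0 + 1)
      = (1 / (2 * (↑(m + 1) : ℝ) + 1)) ^ 2 / 3 := by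
    norm_num
    ring
  rw [he] at h0
  exact h0

/-- strict upper bound: compare with geometric series with ratio t², factor 1/3. -/
lemma diff_upper (m : ℕ) :
    s (m + 1) - s (m + 2) <
      (1 / (2 * (↑(m + 1) : ℝ) + 1)) ^ 2 / (3 * (1 - (1 / (2 * (↑(m + 1) : ℝ) + 1)) ^ 2)) := by
  set t : ℝ := 1 / (2 * (↑(m + 1) : ℝ) + 1) with ht
  have htpos : 0 < t := by positivity
  have ht1 : t < 1 := by
    rw [ht, div_lt_one (by positivity)]
    have : (0:ℝ) ≤ (m:ℝ) := Nat.cast_nonneg m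
    push_cast
    linarith
  have ht2 : t ^ 2 < 1 := by nlinarith
  have hgeo : HasSum (fun k : ℕ => (1 / 3 : ℝ) * (t ^ 2) ^ (k + 1))
      (1 / 3 * (t ^ 2 / (1 - t ^ 2))) := by
    have := (hasSum_geometric_of_lt_one (by positivity) ht2).mul_left (t ^ 2)
    simp_rw [← _root_.pow_succ'] at this
    exact this.mul_left (1 / 3)
  have hle : ∀ k : ℕ, (1 : ℝ) / (2 * ↑(k + 1) + 1) * (t ^ 2) ^ (k + 1) ≤
      (1 / 3 : ℝ) * (t ^ 2) ^ (k + 1) := by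
    intro k
    apply mul_le_mul_of_nonneg_right _ (by positivity)
    rw [div_le_div_iff₀ (by positivity) (by norm_num)]
    push_cast
    linarith [Nat.cast_nonneg (α := ℝ) k]
  have hstrict : (fun k : ℕ => (1 : ℝ) / (2 * ↑(k + 1) + 1) * (t ^ 2) ^ (k + 1)) 1 <
      (fun k : ℕ => (1 / 3 : ℝ) * (t ^ 2) ^ (k + 1)) 1 := by
    simp only
    apply mul_lt_mul_of_pos_right _ (by positivity)
    norm_num
  have h := Stirling.log_stirlingSeq_diff_hasSum m
  have hsum : HasSum (fun k : ℕ => (1 : ℝ) / (2 * ↑(k + 1) + 1) * (t ^ 2) ^ (k + 1))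
      (s (m + 1) - s (m + 2)) := by
    have heq : (fun k : ℕ => (1 : ℝ) / (2 * ↑(k + 1) + 1) * (t ^ 2) ^ (k + 1)) =
        (fun k : ℕ => (1 : ℝ) / (2 * ↑(k + 1) + 1) *
          ((1 / (2 * (↑(m + 1) : ℝ) + 1)) ^ 2) ^ (k + 1)) := by
      funext k
      rw [ht]
    rw [heq]
    exact h
  have hlt := hasSum_lt hle hstrict hsum hgeo
  have hne : (0:ℝ) < 1 - t ^ 2 := by nlinarith
  calc s (m + 1) - s (m + 2) < 1 / 3 * (t ^ 2 / (1 - t ^ 2)) := hlt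
    _ = t ^ 2 / (3 * (1 - t ^ 2)) := by
      field_simp

lemma key_lower (x : ℝ) (hx1 : 1 ≤ x) :
    1 / (12 * x + 1) - 1 / (12 * (x + 1) + 1) < (1 / (2 * x + 1)) ^ 2 / 3 := by
  have h2 : (0:ℝ) < 2 * x + 1 := by linarith
  have h12 : (0:ℝ) < 12 * x + 1 := by linarith
  have h13 : (0:ℝ) < 12 * (x + 1) + 1 := by linarith
  rw [div_sub_div _ _ (ne_of_gt h12) (ne_of_gt h13), div_pow, one_pow, div_div,
    div_lt_div_iff₀ (by positivity) (by positivity)]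
  nlinarith [sq_nonneg x]

lemma key_upper (x : ℝ) (hx1 : 1 ≤ x) :
    (1 / (2 * x + 1)) ^ 2 / (3 * (1 - (1 / (2 * x + 1)) ^ 2)) =
      1 / (12 * x) - 1 / (12 * (x + 1)) := by
  have h2 : (0:ℝ) < 2 * x + 1 := by linarith
  have hx0 : (0:ℝ) < x := by linarith
  have hd : (1:ℝ) - (1 / (2 * x + 1)) ^ 2 = (4 * x ^ 2 + 4 * x) / (2 * x + 1) ^ 2 := by
    field_simp
    ring
  rw [hd]
  have h4 : (0:ℝ) < 4 * x ^ 2 + 4 * x := by nlinarith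
  have h4' : (4 * x ^ 2 + 4 * x : ℝ) ≠ 0 := h4.ne'
  have h2' : (2 * x + 1 : ℝ) ≠ 0 := h2.ne'
  have hx0' : (x : ℝ) ≠ 0 := hx0.ne'
  have hx1' : (x + 1 : ℝ) ≠ 0 := by positivity
  field_simp
  ring

noncomputable def a (n : ℕ) : ℝ := s n - 1 / (12 * n + 1)

noncomputable def b (n : ℕ) : ℝ := s n - 1 / (12 * n)

lemma a_succ_lt (m : ℕ) : a (m + 2) < a (m + 1) := by
  have hl := diff_lower m
  have hkey := key_lower (↑(m + 1)) (by exact_mod_cast Nat.succ_le_succ (Nat.zero_le m))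
  simp only [a]
  push_cast at hl hkey ⊢
  ring_nf at hl hkey ⊢
  linarith

lemma b_succ_gt (m : ℕ) : b (m + 1) < b (m + 2) := by
  have hu := diff_upper m
  have hkey := key_upper (↑(m + 1)) (by exact_mod_cast Nat.succ_le_succ (Nat.zero_le m))
  rw [hkey] at hu
  simp only [b]
  push_cast at hu ⊢
  ring_nf at hu ⊢
  linarith

lemma tendsto_s : Tendsto s atTop (𝓝 (Real.log (Real.sqrt π))) := by
  have h := Stirling.tendsto_stirlingSeq_sqrt_pi
  have hpos : (0:ℝ) < Real.sqrt π := Real.sqrt_pos.mpr Real.pi_pos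
  exact ((Real.continuousAt_log (ne_of_gt hpos)).tendsto.comp h)

lemma tendsto_a : Tendsto a atTop (𝓝 (Real.log (Real.sqrt π))) := by
  have h1 : Tendsto (fun n : ℕ => 12 * (n:ℝ) + 1) atTop atTop :=
    tendsto_atTop_add_const_right atTop 1
      ((tendsto_natCast_atTop_atTop (R := ℝ)).const_mul_atTop (by norm_num))
  have h2 : Tendsto (fun n : ℕ => 1 / (12 * (n:ℝ) + 1)) atTop (𝓝 0) := by
    simpa only [one_div, Pi.inv_def] using h1.inv_tendsto_atTop
  have heq : a = fun n : ℕ => s n - 1 / (12 * (n:ℝ) + 1) := rfl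
  rw [heq]
  simpa using tendsto_s.sub h2

lemma tendsto_b : Tendsto b atTop (𝓝 (Real.log (Real.sqrt π))) := by
  have h1 : Tendsto (fun n : ℕ => 12 * (n:ℝ)) atTop atTop :=
    (tendsto_natCast_atTop_atTop (R := ℝ)).const_mul_atTop (by norm_num)
  have h2 : Tendsto (fun n : ℕ => 1 / (12 * (n:ℝ))) atTop (𝓝 0) := by
    simpa only [one_div, Pi.inv_def] using h1.inv_tendsto_atTop
  have heq : b = fun n : ℕ => s n - 1 / (12 * (n:ℝ)) := rfl
  rw [heq]
  simpa using tendsto_s.sub h2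

lemma a_antitone : ∀ m k : ℕ, a (m + 1 + k) ≤ a (m + 1) := by
  intro m k
  induction k with
  | zero => simp
  | succ k ih =>
    have e1 : m + 1 + (k + 1) = m + k + 2 := by omega
    have e2 : m + 1 + k = m + k + 1 := by omega
    rw [e1]
    rw [e2] at ih
    exact le_trans (a_succ_lt (m + k)).le ih

lemma b_monotone : ∀ m k : ℕ, b (m + 1) ≤ b (m + 1 + k) := by
  intro m k
  induction k with
  | zero => simp
  | succ k ih =>
    have e1 : m + 1 + (k + 1) = m + k + 2 := by omega
    have e2 : m + 1 + k = m + k + 1 := by omega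
    rw [e1]
    rw [e2] at ih
    exact le_trans ih (b_succ_gt (m + k)).le

lemma log_sqrt_pi_lt_a (m : ℕ) : Real.log (Real.sqrt π) < a (m + 1) := by
  have h1 : Real.log (Real.sqrt π) ≤ a (m + 2) := by
    apply le_of_tendsto tendsto_a
    filter_upwards [Filter.eventually_ge_atTop (m + 2)] with k hk
    obtain ⟨j, rfl⟩ := Nat.exists_eq_add_of_le hk
    exact a_antitone (m + 1) j
  exact lt_of_le_of_lt h1 (a_succ_lt m)

lemma b_lt_log_sqrt_pi (m : ℕ) : b (m + 1) < Real.log (Real.sqrt π) := by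
  have h1 : b (m + 2) ≤ Real.log (Real.sqrt π) := by
    apply ge_of_tendsto tendsto_b
    filter_upwards [Filter.eventually_ge_atTop (m + 2)] with k hk
    obtain ⟨j, rfl⟩ := Nat.exists_eq_add_of_le hk
    exact b_monotone (m + 1) j
  exact lt_of_lt_of_le (b_succ_gt m) h1

end RobbinsAux

/-- Robbins' form of Stirling's approximation:
`√(2πn)·(n/e)^n·e^(1/(12n+1)) < n! < √(2πn)·(n/e)^n·e^(1/(12n))`. -/
theorem stmt_10 (n : ℕ) (hn : 0 < n) :
    Real.sqrt (2 * Real.pi * n) * ((n : ℝ) / Real.exp 1) ^ n *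
        Real.exp (1 / (12 * (n : ℝ) + 1)) < (Nat.factorial n : ℝ) ∧
      (Nat.factorial n : ℝ) <
        Real.sqrt (2 * Real.pi * n) * ((n : ℝ) / Real.exp 1) ^ n *
          Real.exp (1 / (12 * (n : ℝ))) := by
  obtain ⟨m, rfl⟩ : ∃ m, n = m + 1 := ⟨n - 1, (Nat.succ_pred_eq_of_pos hn).symm⟩
  have hnR : (0:ℝ) < (↑(m + 1) : ℝ) := by positivity
  have hfac : (0:ℝ) < ((m + 1).factorial : ℝ) := by
    exact_mod_cast Nat.factorial_pos (m + 1)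
  have hsq : (0:ℝ) < Real.sqrt (2 * π * ↑(m + 1)) := by
    apply Real.sqrt_pos.mpr; positivity
  have hpow : (0:ℝ) < ((↑(m + 1) : ℝ) / Real.exp 1) ^ (m + 1) := by positivity
  -- log of n!
  have hlogfac : Real.log ((m + 1).factorial : ℝ) =
      RobbinsAux.s (m + 1) + 1 / 2 * Real.log (2 * ↑(m + 1)) +
        (↑(m + 1) : ℝ) * Real.log ((↑(m + 1) : ℝ) / Real.exp 1) := by
    have := Stirling.log_stirlingSeq_formula (m + 1)
    unfold RobbinsAux.s
    push_cast at this ⊢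
    linarith
  have hlogenv : ∀ c : ℝ, Real.log (Real.sqrt (2 * π * ↑(m + 1)) *
        ((↑(m + 1) : ℝ) / Real.exp 1) ^ (m + 1) * Real.exp c) =
      Real.log (Real.sqrt π) + 1 / 2 * Real.log (2 * ↑(m + 1)) +
        (↑(m + 1) : ℝ) * Real.log ((↑(m + 1) : ℝ) / Real.exp 1) + c := by
    intro c
    rw [Real.log_mul (by positivity) (Real.exp_ne_zero c),
      Real.log_mul (ne_of_gt hsq) (ne_of_gt hpow), Real.log_exp,
      Real.log_sqrt (by positivity), Real.log_pow]
    have : 2 * π * (↑(m + 1) : ℝ) = π * (2 * ↑(m + 1)) := by ring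
    rw [this, Real.log_mul (ne_of_gt Real.pi_pos) (by positivity),
      Real.log_sqrt (le_of_lt Real.pi_pos)]
    push_cast
    ring
  constructor
  · rw [← Real.log_lt_log_iff (by positivity) hfac, hlogenv, hlogfac]
    have := RobbinsAux.log_sqrt_pi_lt_a m
    unfold RobbinsAux.a at this
    push_cast at this ⊢
    linarith
  · rw [← Real.log_lt_log_iff hfac (by positivity), hlogenv, hlogfac]
    have := RobbinsAux.b_lt_log_sqrt_pi m
    unfold RobbinsAux.b at this
    push_cast at this ⊢
    linarith
end

section
/- For positive integers n and t with t dividing n, the central multinomial coefficient satisfies C(n; n/t,...,n/t) ≤ √(t^t/(2π)^(t−1)) · n^(−(t−1)/2) · t^n. -/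
/-!
Write `j! = s j * √(2j) * (j/e)^j` with `s = stirlingSeq`. For `n = t m` the exponential factors
of `n!` and `(m!)^t` cancel up to `t^n`, and `s n / (s m)^t ≤ (s m)^(1-t) ≤ π^(-(t-1)/2)` since
`s` decreases to its limit `√π`. What is left is the algebra of the prefactor `√(2n) / (2m)^(t/2)`.
-/

open Real Nat Stirling

lemma factorial_eq_stirlingSeq_mul {n : ℕ} (hn : n ≠ 0) :
    (n ! : ℝ) = stirlingSeq n * (√(2 * n) * (n / exp 1) ^ n) := by
  rw [stirlingSeq, div_mul_cancel₀]
  positivity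

lemma stirlingSeq_le_of_le {m n : ℕ} (hm : m ≠ 0) (h : m ≤ n) :
    stirlingSeq n ≤ stirlingSeq m := by
  obtain ⟨m, rfl⟩ := exists_eq_succ_of_ne_zero hm
  obtain ⟨n, rfl⟩ := exists_eq_succ_of_ne_zero (by omega : n ≠ 0)
  exact stirlingSeq'_antitone (by omega)

lemma factorial_mul_div_factorial_pow {t m : ℕ} (ht : t ≠ 0) (hm : m ≠ 0) :
    ((t * m)! : ℝ) / (m ! : ℝ) ^ t =
      stirlingSeq (t * m) / stirlingSeq m ^ t * (√(2 * (t * m)) / √(2 * m) ^ t) * t ^ (t * m) := by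
  have htm : t * m ≠ 0 := mul_ne_zero ht hm
  have hs : 0 < stirlingSeq m := (sqrt_pos.2 pi_pos).trans_le (sqrt_pi_le_stirlingSeq hm)
  rw [factorial_eq_stirlingSeq_mul htm, factorial_eq_stirlingSeq_mul hm]
  have hpow : ((t * m : ℕ) / exp 1 : ℝ) ^ (t * m) = t ^ (t * m) * ((m / exp 1) ^ m) ^ t := by
    rw [← pow_mul, mul_comm m t, ← mul_pow]; push_cast; ring
  rw [hpow]
  push_cast
  field_simp
  ring

lemma stirlingSeq_div_pow_succ_le {m n : ℕ} (k : ℕ) (hm : m ≠ 0) (h : m ≤ n) :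
    stirlingSeq n / stirlingSeq m ^ (k + 1) ≤ (√π ^ k)⁻¹ := by
  have hpi := sqrt_pi_le_stirlingSeq hm
  have hs : 0 < stirlingSeq m := (sqrt_pos.2 pi_pos).trans_le hpi
  calc stirlingSeq n / stirlingSeq m ^ (k + 1)
      ≤ stirlingSeq m / stirlingSeq m ^ (k + 1) := by gcongr; exact stirlingSeq_le_of_le hm h
    _ = (stirlingSeq m ^ k)⁻¹ := by field_simp; ring
    _ ≤ (√π ^ k)⁻¹ := by gcongr

lemma sqrt_pow_of_nonneg {x : ℝ} (hx : 0 ≤ x) (n : ℕ) : √(x ^ n) = √x ^ n := by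
  rw [sqrt_eq_iff_mul_self_eq (by positivity) (by positivity), ← mul_pow, mul_self_sqrt hx]

lemma inv_sqrt_pi_pow_mul_sqrt_div (k : ℕ) {T x : ℝ} (hT : 0 < T) (hx : 0 < x) :
    (√π ^ k)⁻¹ * (√(2 * (T * x)) / √(2 * x) ^ (k + 1)) =
      √(T ^ (k + 1) / (2 * π) ^ k) * (T * x) ^ (-(k : ℝ) / 2) := by
  rw [rpow_div_two_eq_sqrt _ (by positivity), rpow_neg (sqrt_nonneg _), rpow_natCast,
    sqrt_div' _ (by positivity), sqrt_pow_of_nonneg hT.le, sqrt_pow_of_nonneg (by positivity),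
    sqrt_mul zero_le_two, sqrt_mul zero_le_two, sqrt_mul zero_le_two, sqrt_mul hT.le]
  field_simp
  ring

/-- Bound on the central multinomial coefficient with `t` equal parts:
`C(n; n/t,...,n/t) ≤ √(t^t/(2π)^(t−1)) · n^(−(t−1)/2) · t^n`. -/
theorem stmt_11 (n t : ℕ) (hn : 0 < n) (ht : 0 < t) (hdvd : t ∣ n) :
    (Nat.factorial n : ℝ) / (Nat.factorial (n / t) : ℝ) ^ t ≤
      Real.sqrt ((t : ℝ) ^ t / (2 * Real.pi) ^ (t - 1)) *
        (n : ℝ) ^ (-((t : ℝ) - 1) / 2) * (t : ℝ) ^ n := by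
  obtain ⟨m, rfl⟩ := hdvd
  obtain ⟨k, rfl⟩ : ∃ k, t = k + 1 := ⟨t - 1, by omega⟩
  have hm : m ≠ 0 := by rintro rfl; simp at hn
  rw [Nat.mul_div_cancel_left m ht, factorial_mul_div_factorial_pow ht.ne' hm]
  calc _ ≤ (√π ^ k)⁻¹ * (√(2 * ((k + 1 : ℕ) * m)) / √(2 * m) ^ (k + 1)) *
        ((k + 1 : ℕ) : ℝ) ^ ((k + 1) * m) := by
        gcongr
        exact stirlingSeq_div_pow_succ_le k hm (Nat.le_mul_of_pos_left m ht)
    _ = _ := by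
        rw [inv_sqrt_pi_pow_mul_sqrt_div k (by positivity) (by positivity)]
        push_cast
        rw [add_sub_cancel_right]
end
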